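/- Let (G, L) be a graft on a finite vertex set and let v ∈ L. Then the corank over GF(2) of the adjacency matrix A_{(G,L)} equals the corank over GF(2) of the adjacency matrix A_{(G,L) ⊟ v} of the graft obtained by local complementation deletion at v. -/

import Mathlib

/-!
Since `v ∈ L`, the `(v, v)` entry of `A = A_{(G,L)}` is `1`, and eliminating the row and column
of `v` with this pivot leaves the Schur complement with entries `A u w - A u v * A v w`. Over
GF(2) this toggles the adjacency between any two neighbours of `v` and the mark of each
neighbour of `v`, so it is exactly the adjacency matrix of `(G, L) ⊟ v`. The elimination lowers
both the size and the rank by one, hence preserves the corank.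
-/

open scoped Classical symmDiff

/-- Local complementation of a simple graph at a vertex `v`: toggle the adjacency
between every pair of distinct neighbours of `v`. -/
def SimpleGraph.localComp {V : Type*} (G : SimpleGraph V) (v : V) : SimpleGraph V where
  Adj u w := u ≠ w ∧ (Xor' (G.Adj u w) (G.Adj v u ∧ G.Adj v w))
  symm := by
    constructor
    rintro u w ⟨h1, h2⟩
    refine ⟨h1.symm, ?_⟩
    rw [G.adj_comm w u, and_comm]
    exact h2
  loopless := ⟨by intro u h; exact h.1 rfl⟩

/-- Local complementation deletion `G ⊟ v`, keeping the ambient vertex type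
(the deleted vertex becomes isolated). -/
def SimpleGraph.lcdel {V : Type*} (G : SimpleGraph V) (v : V) : SimpleGraph V where
  Adj u w := u ≠ v ∧ w ≠ v ∧ (G.localComp v).Adj u w
  symm := ⟨by intro u w h; exact ⟨h.2.1, h.1, (G.localComp v).adj_symm h.2.2⟩⟩
  loopless := ⟨by intro u h; exact (G.localComp v).irrefl h.2.2⟩

/-- A graft: a simple graph whose edges lie inside a finite support, together with
a marked set of vertices `L ⊆ support`. -/
structure Graft (V : Type*) where
  support : Finset V
  G : SimpleGraph V
  edge_mem : ∀ ⦃u w : V⦄, G.Adj u w → u ∈ support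
  L : Finset V
  L_sub : L ⊆ support

variable {V : Type*} [Fintype V] [DecidableEq V]

/-- Local complementation deletion of a graft at a vertex:
`(G, L) ⊟ v = (G ⊟ v, (L \ {v}) ∆ N_G(v))`. -/
noncomputable def Graft.lcd (Γ : Graft V) (v : V) : Graft V where
  support := Γ.support.erase v
  G := Γ.G.lcdel v
  edge_mem := by
    intro u w h
    obtain ⟨hu, hw, hne, hx⟩ := h
    refine Finset.mem_erase.mpr ⟨hu, ?_⟩
    rcases (hx : (Γ.G.Adj u w ∧ ¬(Γ.G.Adj v u ∧ Γ.G.Adj v w)) ∨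
        ((Γ.G.Adj v u ∧ Γ.G.Adj v w) ∧ ¬Γ.G.Adj u w)) with ⟨ha, -⟩ | ⟨⟨hv1, -⟩, -⟩
    · exact Γ.edge_mem ha
    · exact Γ.edge_mem (Γ.G.adj_symm hv1)
  L := (Γ.L.erase v) ∆ (Finset.univ.filter fun u => Γ.G.Adj v u)
  L_sub := by
    intro u hu
    rw [Finset.mem_symmDiff] at hu
    refine Finset.mem_erase.mpr ?_
    rcases hu with ⟨h1, -⟩ | ⟨h2, -⟩
    · exact ⟨(Finset.mem_erase.mp h1).1, Γ.L_sub (Finset.mem_erase.mp h1).2⟩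
    · have hadj : Γ.G.Adj v u := (Finset.mem_filter.mp h2).2
      exact ⟨fun h => Γ.G.irrefl (h ▸ hadj), Γ.edge_mem (Γ.G.adj_symm hadj)⟩

/-- `Δ` is a local complementation minor of `Γ`: it is obtained from `Γ` by a
finite sequence of local complementation deletions, each performed at a vertex
of the current mark set. -/
inductive Graft.IsLCMinor : Graft V → Graft V → Prop
  | refl (Γ : Graft V) : Graft.IsLCMinor Γ Γ
  | step {Γ Δ : Graft V} (v : V) (hv : v ∈ Γ.L) :
      Graft.IsLCMinor (Γ.lcd v) Δ → Graft.IsLCMinor Γ Δ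

/-- The adjacency matrix over GF(2) of a graft, indexed by its support. -/
noncomputable def Graft.matrix (Γ : Graft V) :
    Matrix Γ.support Γ.support (ZMod 2) := fun u w =>
  if (u : V) = (w : V) then (if (u : V) ∈ Γ.L then 1 else 0)
  else (if Γ.G.Adj (u : V) (w : V) then 1 else 0)

/-- The corank over GF(2) of the adjacency matrix of a graft. -/
noncomputable def Graft.corank (Γ : Graft V) : ℕ :=
  Γ.support.card - Γ.matrix.rank

open Matrix Module

theorem Submodule.finrank_prod {K M N : Type*} [DivisionRing K] [AddCommGroup M]
    [AddCommGroup N] [Module K M] [Module K N] [FiniteDimensional K M] [FiniteDimensional K N]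
    (p : Submodule K M) (q : Submodule K N) :
    finrank K (p.prod q) = finrank K p + finrank K q := by
  rw [← Module.finrank_prod, ← LinearMap.finrank_range_of_inj (f := p.subtype.prodMap q.subtype)
    (p.injective_subtype.prodMap q.injective_subtype), LinearMap.range_prodMap, p.range_subtype,
    q.range_subtype]

namespace Matrix

variable {K m n : Type*} [Field K] [Fintype m] [Fintype n] [DecidableEq m] [DecidableEq n]

theorem rank_fromBlocks_zero_zero (A : Matrix m m K) (D : Matrix n n K) :
    (fromBlocks A 0 0 D).rank = A.rank + D.rank := by
  let b := (Pi.basisFun K m).prod (Pi.basisFun K n)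
  have h : fromBlocks A 0 0 D = LinearMap.toMatrix b b (A.toLin'.prodMap D.toLin') := by
    rw [LinearMap.toMatrix_prodMap, LinearMap.toMatrix_eq_toMatrix',
      LinearMap.toMatrix_eq_toMatrix', LinearMap.toMatrix'_toLin', LinearMap.toMatrix'_toLin']
  rw [h, rank_eq_finrank_range_toLin _ b b, Matrix.toLin_toMatrix, LinearMap.range_prodMap,
    Submodule.finrank_prod]
  rfl

theorem rank_fromBlocks_of_invertible₁₁ (A : Matrix m m K) (B : Matrix m n K)
    (C : Matrix n m K) (D : Matrix n n K) [Invertible A] :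
    (fromBlocks A B C D).rank = Fintype.card m + (D - C * ⅟A * B).rank := by
  have hL : IsUnit (fromBlocks 1 0 (C * ⅟A) 1 : Matrix (m ⊕ n) (m ⊕ n) K).det := by simp
  have hR : IsUnit (fromBlocks 1 (⅟A * B) 0 1 : Matrix (m ⊕ n) (m ⊕ n) K).det := by simp
  rw [fromBlocks_eq_of_invertible₁₁, rank_mul_eq_left_of_isUnit_det _ _ hR,
    rank_mul_eq_right_of_isUnit_det _ _ hL, rank_fromBlocks_zero_zero,
    rank_of_isUnit A (isUnit_of_invertible A)]

variable {α : Type*} [Fintype α] [DecidableEq α]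

/-- The Schur complement of the `1 × 1` block of `A` at `(i, i)`. -/
def pivot (A : Matrix α α K) (i : α) : Matrix {j // j ≠ i} {j // j ≠ i} K :=
  of fun j k => A j k - A j i * (A i i)⁻¹ * A i k

theorem rank_eq_one_add_rank_pivot (A : Matrix α α K) (i : α) (hi : A i i ≠ 0) :
    A.rank = 1 + (A.pivot i).rank := by
  let e := Equiv.sumCompl (· = i)
  have hblocks : A.submatrix e e = fromBlocks (A.submatrix (↑) (↑)) (A.submatrix (↑) (↑))
      (A.submatrix (↑) (↑)) (A.submatrix (↑) (↑)) := by
    ext (_ | _) (_ | _) <;> rfl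
  have hdefault : ((default : {j // j = i}) : α) = i := rfl
  let _ : Invertible (A.submatrix (↑) (↑) : Matrix {j // j = i} {j // j = i} K) :=
    { invOf := of fun _ _ => (A i i)⁻¹
      invOf_mul_self := by ext ⟨_, rfl⟩ ⟨_, rfl⟩; simp [mul_apply, hdefault, hi]
      mul_invOf_self := by ext ⟨_, rfl⟩ ⟨_, rfl⟩; simp [mul_apply, hdefault, hi] }
  rw [← rank_submatrix A e e, hblocks, rank_fromBlocks_of_invertible₁₁, Fintype.card_unique]
  congr
  ext j k
  simp [mul_apply, hdefault]

end Matrix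

def Graft.lcdSupportEquiv (Γ : Graft V) {v : V} (hv : v ∈ Γ.support) :
    {u : Γ.support // u ≠ ⟨v, hv⟩} ≃ (Γ.lcd v).support where
  toFun u := ⟨u.1, Finset.mem_erase.2 ⟨fun h => u.2 (Subtype.ext h), u.1.2⟩⟩
  invFun u := ⟨⟨u, Finset.mem_of_mem_erase u.2⟩, fun h => Finset.ne_of_mem_erase u.2 congr($h.1)⟩
  left_inv _ := rfl
  right_inv _ := rfl

theorem ZMod.two_ite_sub_ite_mul_ite (p q r : Prop) [Decidable p] [Decidable q] [Decidable r] :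
    ((if p then 1 else 0) - (if q then 1 else 0) * (if r then 1 else 0) : ZMod 2) =
      if Xor p (q ∧ r) then 1 else 0 := by
  by_cases p <;> by_cases q <;> by_cases r <;> simp [*]

theorem Graft.pivot_matrix (Γ : Graft V) {v : V} (hv : v ∈ Γ.L) :
    Γ.matrix.pivot ⟨v, Γ.L_sub hv⟩ =
      (Γ.lcd v).matrix.submatrix (Γ.lcdSupportEquiv _) (Γ.lcdSupportEquiv _) := by
  ext ⟨⟨u, _⟩, huv⟩ ⟨⟨w, _⟩, hwv⟩
  replace huv : u ≠ v := fun h => huv (Subtype.ext h)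
  replace hwv : v ≠ w := fun h => hwv (Subtype.ext h.symm)
  simp only [Matrix.pivot, of_apply, submatrix_apply, Graft.lcdSupportEquiv, Equiv.coe_fn_mk,
    Graft.matrix, if_pos hv, if_true, inv_one, mul_one, if_neg huv, if_neg hwv, Γ.G.adj_comm u v]
  by_cases huw : u = w
  · subst huw
    rw [if_pos rfl, if_pos rfl, ZMod.two_ite_sub_ite_mul_ite]
    refine if_congr ?_ rfl rfl
    simp [Graft.lcd, Finset.mem_symmDiff, huv, Xor]
  · rw [if_neg huw, if_neg huw, ZMod.two_ite_sub_ite_mul_ite]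
    exact if_congr ⟨fun h => ⟨huv, hwv.symm, huw, h⟩, fun h => h.2.2.2⟩ rfl rfl

/-- Local complementation deletion at a marked vertex preserves the corank over
GF(2) of the adjacency matrix of a graft. -/
theorem corank_lcd_eq {V : Type*} [Fintype V] [DecidableEq V]
    (Γ : Graft V) (v : V) (hv : v ∈ Γ.L) :
    Γ.corank = (Γ.lcd v).corank := by
  have hvS : v ∈ Γ.support := Γ.L_sub hv
  have hrank : Γ.matrix.rank = 1 + (Γ.lcd v).matrix.rank := by
    rw [rank_eq_one_add_rank_pivot _ ⟨v, hvS⟩ (by simp [Graft.matrix, hv]), Γ.pivot_matrix hv,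
      rank_submatrix]
  have hcard : (Γ.lcd v).support.card = Γ.support.card - 1 := Finset.card_erase_of_mem hvS
  rw [Graft.corank, Graft.corank, hrank, hcard]
  omega
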